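/- Let A, B, C, D be 3×3 complex matrices, and define the 6×6 block matrices S1 = [[A, B], [C, D]] and S2 = [[A, -B], [-C, D]]. Then S1·S2·S1 = S2·S1·S2 if and only if A²B - BCB - ABD + BD² = 0 and CA² - DCA - CBC + D²C = 0. -/

import Mathlib

/-!
Negating the off-diagonal blocks `B, C` of `S₁` gives `S₂`. Each block of `S₁ S₂ S₁` is a
polynomial in `A, B, C, D` that is even in `(B, C)` on the diagonal and odd off it, so `S₂ S₁ S₂`
is `S₁ S₂ S₁` with its off-diagonal blocks negated. Over a ring without additive torsion the braid
relation therefore says exactly that the two off-diagonal blocks of `S₁ S₂ S₁` vanish.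
-/

open Matrix

instance Matrix.instIsAddTorsionFree {m n R : Type*} [AddGroup R] [IsAddTorsionFree R] :
    IsAddTorsionFree (Matrix m n R) :=
  inferInstanceAs (IsAddTorsionFree (m → n → R))

theorem fromBlocks_eq_fromBlocks_neg_iff {l m n o R : Type*} [AddGroup R] [IsAddTorsionFree R]
    (A : Matrix n l R) (B : Matrix n m R) (C : Matrix o l R) (D : Matrix o m R) :
    fromBlocks A B C D = fromBlocks A (-B) (-C) D ↔ B = 0 ∧ C = 0 := by
  simp only [fromBlocks_inj, self_eq_neg, true_and, and_true]

section Braid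

variable {l m R : Type*} [Fintype l] [Fintype m] [DecidableEq l] [DecidableEq m] [Ring R]
  (A : Matrix l l R) (B : Matrix l m R) (C : Matrix m l R) (D : Matrix m m R)

theorem fromBlocks_mul_fromBlocks_neg_mul_fromBlocks :
    fromBlocks A B C D * fromBlocks A (-B) (-C) D * fromBlocks A B C D =
      fromBlocks (A ^ 3 - B * C * A - A * B * C + B * D * C)
        (A ^ 2 * B - B * C * B - A * B * D + B * D ^ 2)
        (C * A ^ 2 - D * C * A - C * B * C + D ^ 2 * C)
        (C * A * B - D * C * B - C * B * D + D ^ 3) := by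
  simp only [fromBlocks_multiply, fromBlocks_inj, pow_succ, pow_zero, Matrix.one_mul,
    Matrix.mul_neg, Matrix.neg_mul, Matrix.add_mul, Matrix.mul_assoc]
  refine ⟨?_, ?_, ?_, ?_⟩ <;> abel

theorem fromBlocks_neg_mul_fromBlocks_mul_fromBlocks_neg :
    fromBlocks A (-B) (-C) D * fromBlocks A B C D * fromBlocks A (-B) (-C) D =
      fromBlocks (A ^ 3 - B * C * A - A * B * C + B * D * C)
        (-(A ^ 2 * B - B * C * B - A * B * D + B * D ^ 2))
        (-(C * A ^ 2 - D * C * A - C * B * C + D ^ 2 * C))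
        (C * A * B - D * C * B - C * B * D + D ^ 3) := by
  have h := fromBlocks_mul_fromBlocks_neg_mul_fromBlocks A (-B) (-C) D
  rw [neg_neg, neg_neg] at h
  rw [h]
  congr 1 <;> simp only [Matrix.mul_neg, Matrix.neg_mul, neg_neg] <;> abel

end Braid

theorem stmt_0 (A B C D : Matrix (Fin 3) (Fin 3) ℂ) :
    (fromBlocks A B C D * fromBlocks A (-B) (-C) D * fromBlocks A B C D =
      fromBlocks A (-B) (-C) D * fromBlocks A B C D * fromBlocks A (-B) (-C) D) ↔
    (A ^ 2 * B - B * C * B - A * B * D + B * D ^ 2 = 0 ∧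
      C * A ^ 2 - D * C * A - C * B * C + D ^ 2 * C = 0) := by
  rw [fromBlocks_mul_fromBlocks_neg_mul_fromBlocks,
    fromBlocks_neg_mul_fromBlocks_mul_fromBlocks_neg, fromBlocks_eq_fromBlocks_neg_iff]
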